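/- There exists δ₀ > 0 such that Π(δ) > 0 for all 0 < δ ≤ δ₀ if and only if there exists m ≥ 1 such that α_k > 0 for all k ≥ m and ∑_{k=m}^∞ 2^{−k} log(α_k) > −∞ (i.e., the partial sums of this series are bounded from below; its positive part is automatically summable since the α_k are bounded). -/

import Mathlib

/-- The function `f(r) := γ − √(γ² − 1/2)` with `γ := (1/4)(3 + r/2)`. -/
noncomputable def fpaper (r : ℝ) : ℝ :=
  (1/4) * (3 + r/2) - Real.sqrt (((1/4) * (3 + r/2))^2 - 1/2)

/-- `α_k(n)`: `α_k(0) := α_k` and `α_k(n+1) := (1/2)·α_{k+1}(n)`. -/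
noncomputable def alphaSeq (α : ℕ → ℝ) : ℕ → ℕ → ℝ
  | 0 => α
  | n+1 => fun k => (1/2) * alphaSeq α n (k+1)

/-- `δ(n)`: `δ(0) := δ` and `δ(n+1) := 2ξ_δ(n)δ(n)` where `ξ_δ(n) := f(α₁(n)/δ(n))`. -/
noncomputable def deltaSeq (α : ℕ → ℝ) (δ : ℝ) : ℕ → ℝ
  | 0 => δ
  | n+1 => 2 * fpaper (alphaSeq α n 1 / deltaSeq α δ n) * deltaSeq α δ n

/-- `ξ_δ(n) := f(α₁(n)/δ(n))`. -/
noncomputable def xiSeq (α : ℕ → ℝ) (δ : ℝ) (n : ℕ) : ℝ :=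
  fpaper (alphaSeq α n 1 / deltaSeq α δ n)

/-- The infinite product `Π(δ) := ∏_{k=0}^∞ (1 − ξ_δ(k))`, realized as the infimum of
the partial products (which equals their limit, since all factors lie in `[1/2,1)`). -/
noncomputable def PiProd (α : ℕ → ℝ) (δ : ℝ) : ℝ :=
  ⨅ n : ℕ, ∏ k ∈ Finset.range n, (1 - xiSeq α δ k)

lemma fpaper_lb {r : ℝ} (hr : 0 ≤ r) : 1/(3 + r/2) ≤ fpaper r := by
  unfold fpaper
  set γ : ℝ := (1/4) * (3 + r/2) with hγdef
  have hγ : (3:ℝ)/4 ≤ γ := by rw [hγdef]; linarith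
  have h13 : 1/(4*γ) ≤ 1/3 := by
    apply one_div_le_one_div_of_le (by norm_num) (by linarith)
  have hs : Real.sqrt (γ^2 - 1/2) ≤ γ - 1/(4*γ) := by
    rw [Real.sqrt_le_iff]
    refine ⟨by linarith, ?_⟩
    have heq : (γ - 1/(4*γ))^2 = γ^2 - 1/2 + 1/(16*γ^2) := by
      field_simp; ring
    have hp : (0:ℝ) ≤ 1/(16*γ^2) := by positivity
    linarith
  have h4γ : 1/(4*γ) = 1/(3 + r/2) := by rw [hγdef]; ring_nf
  linarith [hs, h4γ.symm.le, h4γ.le]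

lemma fpaper_ub {r : ℝ} (hr : 0 ≤ r) : fpaper r ≤ 2/(3 + r/2) := by
  unfold fpaper
  set γ : ℝ := (1/4) * (3 + r/2) with hγdef
  have hγ : (3:ℝ)/4 ≤ γ := by rw [hγdef]; linarith
  have h13 : 1/(2*γ) ≤ 2/3 := by
    rw [div_le_div_iff₀ (by linarith) (by norm_num)]; linarith
  have hs : γ - 1/(2*γ) ≤ Real.sqrt (γ^2 - 1/2) := by
    rw [Real.le_sqrt (by linarith) (by nlinarith)]
    have heq : (γ - 1/(2*γ))^2 = γ^2 - 1 + 1/(4*γ^2) := by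
      field_simp; ring
    have h12 : 1/(4*γ^2) ≤ 1/2 := by
      apply one_div_le_one_div_of_le (by norm_num) (by nlinarith)
    linarith
  have h2γ : 1/(2*γ) = 2/(3 + r/2) := by
    rw [hγdef]; rw [div_eq_div_iff (by linarith) (by linarith)]; ring
  linarith [hs, h2γ.le, h2γ.symm.le]

lemma fpaper_le_half {r : ℝ} (hr : 0 ≤ r) : fpaper r ≤ 1/2 := by
  unfold fpaper
  set γ : ℝ := (1/4) * (3 + r/2) with hγdef
  have hγ : (3:ℝ)/4 ≤ γ := by rw [hγdef]; linarith
  have hs : γ - 1/2 ≤ Real.sqrt (γ^2 - 1/2) := by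
    rw [Real.le_sqrt (by linarith) (by nlinarith)]
    nlinarith
  linarith

lemma fpaper_pos {r : ℝ} (hr : 0 ≤ r) : 0 < fpaper r := by
  have h3 : (0:ℝ) < 1/(3 + r/2) := by positivity
  linarith [fpaper_lb hr]

lemma alphaSeq_eq (α : ℕ → ℝ) : ∀ n k, alphaSeq α n k = (1/2)^n * α (k+n) := by
  intro n
  induction n with
  | zero => intro k; simp [alphaSeq]
  | succ n ih =>
    intro k
    show (1/2) * alphaSeq α n (k+1) = _
    rw [ih (k+1)]
    rw [show k + 1 + n = k + (n+1) by ring]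
    ring

section seq
variable {α : ℕ → ℝ} {δ : ℝ}

lemma alpha1 (hα : ∀ k, 1 ≤ k → 0 ≤ α k) (n : ℕ) : 0 ≤ alphaSeq α n 1 := by
  rw [alphaSeq_eq]
  have := hα (1+n) (by omega)
  positivity

lemma delta_pos (hα : ∀ k, 1 ≤ k → 0 ≤ α k) (hδ : 0 < δ) :
    ∀ n, 0 < deltaSeq α δ n := by
  intro n
  induction n with
  | zero => exact hδ
  | succ n ih =>
    show 0 < 2 * fpaper _ * deltaSeq α δ n
    have hr : 0 ≤ alphaSeq α n 1 / deltaSeq α δ n := div_nonneg (alpha1 hα n) ih.le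
    have := fpaper_pos hr
    positivity

lemma r_nonneg (hα : ∀ k, 1 ≤ k → 0 ≤ α k) (hδ : 0 < δ) (n : ℕ) :
    0 ≤ alphaSeq α n 1 / deltaSeq α δ n :=
  div_nonneg (alpha1 hα n) (delta_pos hα hδ n).le

lemma xi_pos (hα : ∀ k, 1 ≤ k → 0 ≤ α k) (hδ : 0 < δ) (n : ℕ) :
    0 < xiSeq α δ n := fpaper_pos (r_nonneg hα hδ n)

lemma xi_le_half (hα : ∀ k, 1 ≤ k → 0 ≤ α k) (hδ : 0 < δ) (n : ℕ) :
    xiSeq α δ n ≤ 1/2 := fpaper_le_half (r_nonneg hα hδ n)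

lemma delta_succ (n : ℕ) :
    deltaSeq α δ (n+1) = 2 * xiSeq α δ n * deltaSeq α δ n := rfl

lemma delta_succ_le (hα : ∀ k, 1 ≤ k → 0 ≤ α k) (hδ : 0 < δ) (n : ℕ) :
    deltaSeq α δ (n+1) ≤ deltaSeq α δ n := by
  rw [delta_succ]
  have h1 := xi_le_half hα hδ n
  have h2 := (delta_pos hα hδ n)
  nlinarith

lemma delta_le (hα : ∀ k, 1 ≤ k → 0 ≤ α k) (hδ : 0 < δ) (n : ℕ) :
    deltaSeq α δ n ≤ δ := by
  induction n with
  | zero => exact le_refl _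
  | succ n ih => exact le_trans (delta_succ_le hα hδ n) ih

/-- partial products are bounded below by `exp (-2 * (sum of ξ))`. -/
lemma prod_ge (hα : ∀ k, 1 ≤ k → 0 ≤ α k) (hδ : 0 < δ) (n : ℕ) :
    Real.exp (-2 * ∑ k ∈ Finset.range n, xiSeq α δ k)
      ≤ ∏ k ∈ Finset.range n, (1 - xiSeq α δ k) := by
  have : Real.exp (-2 * ∑ k ∈ Finset.range n, xiSeq α δ k)
      = ∏ k ∈ Finset.range n, Real.exp (-2 * xiSeq α δ k) := by
    rw [← Real.exp_sum, Finset.mul_sum]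
  rw [this]
  apply Finset.prod_le_prod
  · intro i _; positivity
  · intro i _
    have h1 := xi_pos hα hδ i
    have h2 := xi_le_half hα hδ i
    set x := xiSeq α δ i
    have he : 1 + 2*x ≤ Real.exp (2*x) := by
      have := Real.add_one_le_exp (2*x); linarith
    have hne : Real.exp (-2*x) = 1 / Real.exp (2*x) := by
      rw [show (-2*x : ℝ) = -(2*x) by ring, Real.exp_neg, one_div]
    rw [hne, div_le_iff₀ (Real.exp_pos _)]
    nlinarith [Real.exp_pos (2*x)]

lemma prod_le (hα : ∀ k, 1 ≤ k → 0 ≤ α k) (hδ : 0 < δ) (n : ℕ) :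
    ∏ k ∈ Finset.range n, (1 - xiSeq α δ k)
      ≤ Real.exp (-∑ k ∈ Finset.range n, xiSeq α δ k) := by
  have : Real.exp (-∑ k ∈ Finset.range n, xiSeq α δ k)
      = ∏ k ∈ Finset.range n, Real.exp (-xiSeq α δ k) := by
    rw [← Real.exp_sum, ← Finset.sum_neg_distrib]
  rw [this]
  apply Finset.prod_le_prod
  · intro i _
    have h1 := xi_pos hα hδ i
    have h2 := xi_le_half hα hδ i
    linarith
  · intro i _
    have := Real.add_one_le_exp (-xiSeq α δ i)
    linarith

lemma piprod_pos_of_bdd (hα : ∀ k, 1 ≤ k → 0 ≤ α k) (hδ : 0 < δ)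
    (S : ℝ) (hS : ∀ n, ∑ k ∈ Finset.range n, xiSeq α δ k ≤ S) :
    0 < PiProd α δ := by
  have : Real.exp (-2*S) ≤ PiProd α δ := by
    apply le_ciInf
    intro n
    refine le_trans ?_ (prod_ge hα hδ n)
    apply Real.exp_le_exp.mpr
    have := hS n; linarith
  linarith [Real.exp_pos (-2*S)]

lemma sum_xi_le_of_piprod_pos (hα : ∀ k, 1 ≤ k → 0 ≤ α k) (hδ : 0 < δ)
    (hP : 0 < PiProd α δ) (n : ℕ) :
    ∑ k ∈ Finset.range n, xiSeq α δ k ≤ -Real.log (PiProd α δ) := by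
  have hbdd : BddBelow (Set.range fun n => ∏ k ∈ Finset.range n, (1 - xiSeq α δ k)) := by
    refine ⟨0, ?_⟩
    rintro x ⟨n, rfl⟩
    exact le_trans (Real.exp_pos _).le (prod_ge hα hδ n)
  have h1 : PiProd α δ ≤ ∏ k ∈ Finset.range n, (1 - xiSeq α δ k) := ciInf_le hbdd n
  have h2 := prod_le hα hδ n
  have h3 : PiProd α δ ≤ Real.exp (-∑ k ∈ Finset.range n, xiSeq α δ k) := le_trans h1 h2
  have := Real.log_le_log hP h3
  rw [Real.log_exp] at this
  linarith

end seq

lemma forward (α : ℕ → ℝ) (hα : ∀ k, 1 ≤ k → 0 ≤ α k) (δ : ℝ)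
    (hδpos : 0 < δ) (hδ1 : δ ≤ 1) (hP : 0 < PiProd α δ) :
    ∃ m : ℕ, 1 ≤ m ∧ (∀ k, m ≤ k → 0 < α k) ∧
      ∃ L : ℝ, ∀ n, L ≤ ∑ k ∈ Finset.Icc m n, (1/2:ℝ)^k * Real.log (α k) := by
  set ξ := xiSeq α δ with hξdef
  have hξ0 : ∀ n, 0 ≤ ξ n := fun n => (xi_pos hα hδpos n).le
  have hsum : Summable ξ :=
    summable_of_sum_range_le hξ0 (sum_xi_le_of_piprod_pos hα hδpos hP)
  have htend := hsum.tendsto_atTop_zero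
  have hev : ∀ᶠ n in Filter.atTop, ξ n < 2/7 :=
    htend.eventually_lt_const (by norm_num)
  obtain ⟨N₀, hN₀⟩ := Filter.eventually_atTop.mp hev
  set N := max N₀ 1 with hNdef
  have hN1 : 1 ≤ N := le_max_right _ _
  -- r n and its properties
  set r : ℕ → ℝ := fun n => alphaSeq α n 1 / deltaSeq α δ n with hrdef
  have hδn := delta_pos hα hδpos
  have hrval : ∀ n, r n = (1/2)^n * α (n+1) / deltaSeq α δ n := by
    intro n; simp only [hrdef, alphaSeq_eq α n 1, Nat.add_comm]
  have hrn0 : ∀ n, 0 ≤ r n := by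
    intro n
    rw [hrval]
    have := hα (n+1) (by omega)
    exact div_nonneg (by positivity) (hδn n).le
  have hr1 : ∀ n, N ≤ n → 1 < r n := by
    intro n hn
    have hlt : ξ n < 2/7 := hN₀ n (le_trans (le_max_left _ _) hn)
    have hlb : 1/(3 + r n/2) ≤ ξ n := fpaper_lb (hrn0 n)
    have h3 : (0:ℝ) < 3 + r n/2 := by have := hrn0 n; linarith
    have h4 := mul_lt_mul_of_pos_right (lt_of_le_of_lt hlb hlt) h3
    rw [one_div_mul_cancel h3.ne'] at h4
    linarith
  have hαpos : ∀ k, N+1 ≤ k → 0 < α k := by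
    intro k hk
    obtain ⟨n, rfl⟩ : ∃ n, k = n+1 := ⟨k-1, by omega⟩
    have h1 : 1 < r n := hr1 n (by omega)
    have hd := hδn n
    have hq : 0 < (1/2:ℝ)^n * α (n+1) / deltaSeq α δ n := by
      rw [← hrval]; linarith
    by_contra h
    push_neg at h
    have hp : (0:ℝ) < (1/2:ℝ)^n := by positivity
    have : (1/2:ℝ)^n * α (n+1) / deltaSeq α δ n ≤ 0 :=
      div_nonpos_of_nonpos_of_nonneg (by nlinarith) hd.le
    linarith
  set w : ℕ → ℝ := fun j => (1/2:ℝ)^j * Real.log (deltaSeq α δ j) with hwdef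
  have key : ∀ k, N ≤ k → w k - w (k+1) ≤ (1/2:ℝ)^(k+1) * Real.log (α (k+1)) := by
    intro k hk
    have hrk := hr1 k hk
    have hd := hδn k
    have hd1 := hδn (k+1)
    have hαk1 : 0 < α (k+1) := hαpos _ (by omega)
    -- ξ k ≥ 1/(4 r k)
    have hub : 1/(4 * r k) ≤ ξ k := by
      refine le_trans ?_ (fpaper_lb (hrn0 k))
      apply one_div_le_one_div_of_le (by linarith) (by linarith)
    -- δ(k+1) ≥ δ(k)/(2 r k)
    have hδineq : deltaSeq α δ k / (2 * r k) ≤ deltaSeq α δ (k+1) := by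
      have hrec : deltaSeq α δ (k+1) = 2 * ξ k * deltaSeq α δ k := rfl
      rw [hrec]
      calc deltaSeq α δ k / (2 * r k) = 2 * (1/(4 * r k)) * deltaSeq α δ k := by
            field_simp; ring
        _ ≤ 2 * ξ k * deltaSeq α δ k := by
            nlinarith [mul_le_mul_of_nonneg_right hub hd.le]
    -- r k ≥ δ(k) / (2 δ(k+1))
    have h2r : deltaSeq α δ k / (2 * deltaSeq α δ (k+1)) ≤ r k := by
      rw [div_le_iff₀ (by positivity)]
      have h5 := mul_le_mul_of_nonneg_left hδineq (by positivity : (0:ℝ) ≤ 2 * r k)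
      calc deltaSeq α δ k = 2 * r k * (deltaSeq α δ k / (2 * r k)) := by
            field_simp
        _ ≤ 2 * r k * deltaSeq α δ (k+1) := h5
        _ = r k * (2 * deltaSeq α δ (k+1)) := by ring
    -- α(k+1) ≥ X := 2^k * (δ(k)/(2 δ(k+1))) * δ(k)
    have hαval : α (k+1) = 2^k * r k * deltaSeq α δ k := by
      rw [hrval]
      field_simp
      ring
      rw [← mul_pow]; norm_num
    have hX : (2:ℝ)^k * (deltaSeq α δ k / (2 * deltaSeq α δ (k+1))) * deltaSeq α δ k
        ≤ α (k+1) := by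
      rw [hαval]
      have := mul_le_mul_of_nonneg_right
        (mul_le_mul_of_nonneg_left h2r (by positivity : (0:ℝ) ≤ (2:ℝ)^k)) hd.le
      linarith
    have hXpos : (0:ℝ) < (2:ℝ)^k * (deltaSeq α δ k / (2 * deltaSeq α δ (k+1))) * deltaSeq α δ k := by
      positivity
    have hlog := Real.log_le_log hXpos hX
    have hlogX : Real.log ((2:ℝ)^k * (deltaSeq α δ k / (2 * deltaSeq α δ (k+1))) * deltaSeq α δ k)
        = (k:ℝ) * Real.log 2 + (Real.log (deltaSeq α δ k)
            - (Real.log 2 + Real.log (deltaSeq α δ (k+1)))) + Real.log (deltaSeq α δ k) := by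
      rw [Real.log_mul (by positivity) hd.ne', Real.log_mul (by positivity) (by positivity),
        Real.log_div hd.ne' (by positivity), Real.log_mul (by norm_num) hd1.ne', Real.log_pow]
    rw [hlogX] at hlog
    have hk1 : (1:ℝ) ≤ (k:ℝ) := by exact_mod_cast hN1.trans hk
    have hlog2 : 0 ≤ Real.log 2 := Real.log_nonneg (by norm_num)
    have hmain : 2 * Real.log (deltaSeq α δ k) - Real.log (deltaSeq α δ (k+1))
        ≤ Real.log (α (k+1)) := by nlinarith
    have hmul := mul_le_mul_of_nonneg_left hmain
      (by positivity : (0:ℝ) ≤ (1/2:ℝ)^(k+1))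
    have hww : (1/2:ℝ)^(k+1) * (2 * Real.log (deltaSeq α δ k) - Real.log (deltaSeq α δ (k+1)))
        = w k - w (k+1) := by
      simp only [hwdef, pow_succ]
      ring
    linarith [hmul, hww.le, hww.symm.le]
  have hclaim : ∀ n, N ≤ n → w N - w n ≤ ∑ k ∈ Finset.Icc (N+1) n, (1/2:ℝ)^k * Real.log (α k) := by
    intro n hn
    induction n, hn using Nat.le_induction with
    | base => rw [Finset.Icc_eq_empty (by omega)]; simp
    | succ n hn ih =>
      rw [Finset.sum_Icc_succ_top (by omega)]
      have := key n hn
      linarith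
  refine ⟨N+1, by omega, hαpos, min (w N) 0, ?_⟩
  intro n
  rcases le_or_gt N n with h | h
  · have h1 := hclaim n h
    have h2 : Real.log (deltaSeq α δ n) ≤ 0 :=
      Real.log_nonpos (hδn n).le (le_trans (delta_le hα hδpos n) hδ1)
    have h3 : w n ≤ 0 := by
      have hp : (0:ℝ) ≤ (1/2:ℝ)^n := by positivity
      simp only [hwdef]
      nlinarith
    have := min_le_left (w N) 0
    linarith
  · rw [Finset.Icc_eq_empty (by omega)]
    simp only [Finset.sum_empty]
    exact min_le_right (w N) 0

lemma sum_halfpow_le (s : Finset ℕ) : ∑ k ∈ s, (1/2:ℝ)^k ≤ 2 := by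
  have h1 : ∑ k ∈ s, (1/2:ℝ)^k ≤ ∑' k : ℕ, (1/2:ℝ)^k :=
    Summable.sum_le_tsum s (fun i _ => by positivity)
      (summable_geometric_of_lt_one (by norm_num) (by norm_num))
  rw [tsum_geometric_of_lt_one (by norm_num) (by norm_num)] at h1
  norm_num at h1
  exact h1

lemma backward (α : ℕ → ℝ) (hα : ∀ k, 1 ≤ k → 0 ≤ α k)
    (B : ℝ) (hB : ∀ k, 1 ≤ k → α k ≤ B)
    (m : ℕ) (hm : 1 ≤ m) (hpos : ∀ k, m ≤ k → 0 < α k)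
    (L : ℝ) (hL : ∀ n, L ≤ ∑ k ∈ Finset.Icc m n, (1/2:ℝ)^k * Real.log (α k)) :
    ∃ δ₀ > (0:ℝ), ∀ δ : ℝ, 0 < δ → δ ≤ δ₀ → 0 < PiProd α δ := by
  classical
  set S : ℕ → ℝ := fun n => ∑ k ∈ Finset.Icc m n, (1/2:ℝ)^k * Real.log (α k) with hSdef
  set B' : ℝ := max B 1 with hB'def
  have hB1 : (1:ℝ) ≤ B' := le_max_right _ _
  have hlogB : 0 ≤ Real.log B' := Real.log_nonneg hB1
  set C : ℝ := 2 * Real.log B' with hCdef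
  have hSub : ∀ n, S n ≤ C := by
    intro n
    have h1 : S n ≤ ∑ k ∈ Finset.Icc m n, (1/2:ℝ)^k * Real.log B' := by
      apply Finset.sum_le_sum
      intro k hk
      have hkm : m ≤ k := (Finset.mem_Icc.mp hk).1
      have hαk : 0 < α k := hpos k hkm
      have hle : α k ≤ B' := le_trans (hB k (le_trans hm hkm)) (le_max_left _ _)
      have := Real.log_le_log hαk hle
      have hp : (0:ℝ) ≤ (1/2:ℝ)^k := by positivity
      nlinarith
    have h2 : ∑ k ∈ Finset.Icc m n, (1/2:ℝ)^k * Real.log B'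
        = Real.log B' * ∑ k ∈ Finset.Icc m n, (1/2:ℝ)^k := by
      rw [Finset.mul_sum]; apply Finset.sum_congr rfl; intro k _; ring
    have h3 := sum_halfpow_le (Finset.Icc m n)
    have h4 : Real.log B' * ∑ k ∈ Finset.Icc m n, (1/2:ℝ)^k ≤ Real.log B' * 2 :=
      mul_le_mul_of_nonneg_left h3 hlogB
    rw [hCdef]; linarith
  -- m' and constants
  obtain ⟨m', rfl⟩ : ∃ m', m = m' + 1 := ⟨m - 1, by omega⟩
  have hαm : 0 < α (m'+1) := hpos (m'+1) le_rfl
  set Kc : ℝ := 2*L - 2*((1/2:ℝ)^(m'+1) * Real.log (α (m'+1))) - C - Real.log 16 with hKcdef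
  set δ₀ : ℝ := min 1 (α (m'+1) * (1/2:ℝ)^m' * Real.exp (-(2:ℝ)^m' * (1 - Kc))) with hδ₀def
  have hδ₀pos : 0 < δ₀ := by
    apply lt_min one_pos
    exact mul_pos (mul_pos hαm (by positivity)) (Real.exp_pos _)
  refine ⟨δ₀, hδ₀pos, ?_⟩
  intro δ hδpos hδle
  have hδn := delta_pos hα hδpos
  set r : ℕ → ℝ := fun n => alphaSeq α n 1 / deltaSeq α δ n with hrdef
  have hrval : ∀ n, r n = (1/2)^n * α (n+1) / deltaSeq α δ n := by
    intro n; simp only [hrdef, alphaSeq_eq α n 1, Nat.add_comm]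
  have hrpos : ∀ n, m' ≤ n → 0 < r n := by
    intro n hn
    rw [hrval]
    have h := hpos (n+1) (by omega)
    exact div_pos (mul_pos (by positivity) h) (hδn n)
  have hξeq : ∀ n, xiSeq α δ n = fpaper (r n) := fun n => rfl
  -- step inequality on logs
  have hstep : ∀ n, m' ≤ n →
      2 * Real.log (r n) + Real.log (α (n+2)) - Real.log (α (n+1)) - Real.log 16
        ≤ Real.log (r (n+1)) := by
    intro n hn
    have hrn := hrpos n hn
    have hd := hδn n
    have hd1 := hδn (n+1)
    have hα1 : 0 < α (n+1) := hpos _ (by omega)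
    have hα2 : 0 < α (n+2) := hpos _ (by omega)
    have hξub : xiSeq α δ n ≤ 4 / r n := by
      rw [hξeq]
      refine le_trans (fpaper_ub (le_of_lt hrn)) ?_
      rw [div_le_div_iff₀ (by linarith) hrn]
      linarith
    have hδ1ub : deltaSeq α δ (n+1) ≤ 8 * deltaSeq α δ n / r n := by
      have hrec : deltaSeq α δ (n+1) = 2 * xiSeq α δ n * deltaSeq α δ n := rfl
      rw [hrec]
      have := mul_le_mul_of_nonneg_right hξub hd.le
      calc 2 * xiSeq α δ n * deltaSeq α δ n ≤ 2 * (4 / r n * deltaSeq α δ n) := by linarith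
        _ = 8 * deltaSeq α δ n / r n := by field_simp; ring
    have hδeq : deltaSeq α δ n = (1/2)^n * α (n+1) / r n := by
      rw [hrval]
      field_simp
    have hmult : α (n+2) * (r n)^2 / (16 * α (n+1)) ≤ r (n+1) := by
      have h8 : (0:ℝ) < 8 * deltaSeq α δ n / r n := by positivity
      have hdiv : (1/2:ℝ)^(n+1) * α (n+2) / (8 * deltaSeq α δ n / r n)
          ≤ (1/2:ℝ)^(n+1) * α (n+2) / deltaSeq α δ (n+1) :=
        (div_le_div_iff_of_pos_left (by positivity) h8 hd1).mpr hδ1ub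
      rw [← hrval (n+1)] at hdiv
      refine le_trans (le_of_eq ?_) hdiv
      rw [hδeq]
      rw [pow_succ]
      field_simp
      ring
    have hLpos : 0 < α (n+2) * (r n)^2 / (16 * α (n+1)) := by positivity
    have := Real.log_le_log hLpos hmult
    have hexpand : Real.log (α (n+2) * (r n)^2 / (16 * α (n+1)))
        = Real.log (α (n+2)) + 2 * Real.log (r n) - (Real.log 16 + Real.log (α (n+1))) := by
      rw [Real.log_div (by positivity) (by positivity), Real.log_mul hα2.ne' (by positivity),
        Real.log_mul (by norm_num) hα1.ne', Real.log_pow]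
      push_cast; ring
    rw [hexpand] at this
    linarith
  -- the inductive claim
  set W : ℝ := (1/2:ℝ)^m' * Real.log (r m') with hWdef
  have hclaim : ∀ n, m' ≤ n →
      W + 2*(S (n+1) - (1/2:ℝ)^(m'+1) * Real.log (α (m'+1))) - S n
        - Real.log 16 * ((1/2:ℝ)^m' - (1/2:ℝ)^n) ≤ (1/2:ℝ)^n * Real.log (r n) := by
    intro n hn
    induction n, hn using Nat.le_induction with
    | base =>
      have hS1 : S (m'+1) = (1/2:ℝ)^(m'+1) * Real.log (α (m'+1)) := by
        rw [hSdef]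
        show ∑ k ∈ Finset.Icc (m'+1) (m'+1), _ = _
        rw [Finset.Icc_self, Finset.sum_singleton]
      have hS0 : S m' = 0 := by
        rw [hSdef]
        show ∑ k ∈ Finset.Icc (m'+1) m', _ = (0:ℝ)
        rw [Finset.Icc_eq_empty (by omega), Finset.sum_empty]
      rw [hS1, hS0]
      simp [hWdef]
    | succ n hn ih =>
      have hlog := hstep n hn
      have hmul := mul_le_mul_of_nonneg_left hlog
        (by positivity : (0:ℝ) ≤ (1/2:ℝ)^(n+1))
      have hmul' : (1/2:ℝ)^n * Real.log (r n) + (1/2:ℝ)^(n+1) * Real.log (α (n+2))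
          - (1/2:ℝ)^(n+1) * Real.log (α (n+1)) - (1/2:ℝ)^(n+1) * Real.log 16
          ≤ (1/2:ℝ)^(n+1) * Real.log (r (n+1)) := by
        have expand : (1/2:ℝ)^(n+1) * (2 * Real.log (r n) + Real.log (α (n+2))
            - Real.log (α (n+1)) - Real.log 16)
            = (1/2:ℝ)^n * Real.log (r n) + (1/2:ℝ)^(n+1) * Real.log (α (n+2))
            - (1/2:ℝ)^(n+1) * Real.log (α (n+1)) - (1/2:ℝ)^(n+1) * Real.log 16 := by
          rw [pow_succ]; ring
        linarith [hmul, expand.le, expand.ge]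
      have hS2 : S (n+2) = S (n+1) + (1/2:ℝ)^(n+2) * Real.log (α (n+2)) := by
        rw [hSdef]
        exact Finset.sum_Icc_succ_top (by omega) _
      have hS1 : S (n+1) = S n + (1/2:ℝ)^(n+1) * Real.log (α (n+1)) := by
        rw [hSdef]
        exact Finset.sum_Icc_succ_top (by omega) _
      have e2 : 2 * ((1/2:ℝ)^(n+2) * Real.log (α (n+2)))
          = (1/2:ℝ)^(n+1) * Real.log (α (n+2)) := by
        rw [pow_succ]; ring
      have e6 : Real.log 16 * (1/2:ℝ)^n = 2 * (Real.log 16 * (1/2:ℝ)^(n+1)) := by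
        rw [pow_succ]; ring
      rw [hS2]
      linarith [hmul', ih, hS1, e2, e6]
  -- uniform lower bound on (1/2)^n * log (r n)
  have hl16 : 0 ≤ Real.log 16 := Real.log_nonneg (by norm_num)
  have hKbound : ∀ n, m' ≤ n → W + Kc ≤ (1/2:ℝ)^n * Real.log (r n) := by
    intro n hn
    have h1 := hclaim n hn
    have h2 : L ≤ S (n+1) := hL (n+1)
    have h3 : S n ≤ C := hSub n
    have hp1 : (1/2:ℝ)^n ≤ (1/2:ℝ)^m' := pow_le_pow_of_le_one (by norm_num) (by norm_num) hn
    have hp2 : (1/2:ℝ)^m' ≤ 1 := pow_le_one₀ (by norm_num) (by norm_num)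
    have hpn : (0:ℝ) ≤ (1/2:ℝ)^n := by positivity
    have h4 : Real.log 16 * ((1/2:ℝ)^m' - (1/2:ℝ)^n) ≤ Real.log 16 := by
      nlinarith
    simp only [hKcdef]
    linarith
  -- lower bound on W via choice of delta
  have hδm' : deltaSeq α δ m' ≤ α (m'+1) * (1/2:ℝ)^m' * Real.exp (-(2:ℝ)^m' * (1 - Kc)) :=
    le_trans (delta_le hα hδpos m') (le_trans hδle (min_le_right _ _))
  have hrm' : Real.exp ((2:ℝ)^m' * (1 - Kc)) ≤ r m' := by
    have hnum : (0:ℝ) < (1/2:ℝ)^m' * α (m'+1) := mul_pos (by positivity) hαm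
    have hEpos : (0:ℝ) < α (m'+1) * (1/2:ℝ)^m' * Real.exp (-(2:ℝ)^m' * (1 - Kc)) :=
      mul_pos (mul_pos hαm (by positivity)) (Real.exp_pos _)
    have hstep1 : Real.exp ((2:ℝ)^m' * (1 - Kc))
        = ((1/2:ℝ)^m' * α (m'+1)) / (α (m'+1) * (1/2:ℝ)^m' * Real.exp (-(2:ℝ)^m' * (1 - Kc))) := by
      rw [show -(2:ℝ)^m' * (1 - Kc) = -((2:ℝ)^m' * (1 - Kc)) by ring, Real.exp_neg,
        eq_div_iff (by positivity)]
      field_simp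
    have hstep2 : ((1/2:ℝ)^m' * α (m'+1)) / (α (m'+1) * (1/2:ℝ)^m' * Real.exp (-(2:ℝ)^m' * (1 - Kc)))
        ≤ ((1/2:ℝ)^m' * α (m'+1)) / deltaSeq α δ m' :=
      (div_le_div_iff_of_pos_left hnum hEpos (hδn m')).mpr hδm'
    rw [hstep1]
    refine le_trans hstep2 ?_
    rw [hrval m']
  have hWlow : 1 - Kc ≤ W := by
    have hlog : (2:ℝ)^m' * (1 - Kc) ≤ Real.log (r m') := by
      have h := Real.log_le_log (Real.exp_pos _) hrm'
      rwa [Real.log_exp] at h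
    have hmul := mul_le_mul_of_nonneg_left hlog (by positivity : (0:ℝ) ≤ (1/2:ℝ)^m')
    have e : (1/2:ℝ)^m' * ((2:ℝ)^m' * (1 - Kc)) = 1 - Kc := by
      rw [← mul_assoc, ← mul_pow]
      norm_num
    simp only [hWdef]
    linarith [hmul, e.le, e.ge]
  have hone : ∀ n, m' ≤ n → (1:ℝ) ≤ (1/2:ℝ)^n * Real.log (r n) := by
    intro n hn
    have h := hKbound n hn
    have h2 : (1:ℝ) ≤ W + Kc := by linarith
    exact le_trans h2 h
  -- xi is small for n ≥ m'
  have hξsmall : ∀ n, m' ≤ n → xiSeq α δ n ≤ 4 * (1/2:ℝ)^n := by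
    intro n hn
    have h1 := hone n hn
    have hrn := hrpos n hn
    have hlogr : (2:ℝ)^n ≤ Real.log (r n) := by
      have hmul := mul_le_mul_of_nonneg_left h1 (by positivity : (0:ℝ) ≤ (2:ℝ)^n)
      have e : (2:ℝ)^n * ((1/2:ℝ)^n * Real.log (r n)) = Real.log (r n) := by
        rw [← mul_assoc, ← mul_pow]
        norm_num
      rw [e, mul_one] at hmul
      exact hmul
    have hrge : (2:ℝ)^n ≤ r n := by
      have h3 : Real.exp ((2:ℝ)^n) ≤ r n := by
        rw [← Real.exp_log hrn]
        exact Real.exp_le_exp.mpr hlogr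
      have h4 := Real.add_one_le_exp ((2:ℝ)^n)
      linarith
    have hξub : xiSeq α δ n ≤ 4 / r n := by
      rw [hξeq]
      refine le_trans (fpaper_ub hrn.le) ?_
      rw [div_le_div_iff₀ (by linarith) hrn]
      linarith
    refine le_trans hξub ?_
    have h5 : 4 / r n ≤ 4 / (2:ℝ)^n :=
      (div_le_div_iff_of_pos_left (by norm_num) hrn (by positivity)).mpr hrge
    have e : (4:ℝ)/(2:ℝ)^n = 4 * (1/2:ℝ)^n := by
      rw [div_eq_mul_inv, ← inv_pow]
      norm_num
    linarith [h5, e.le, e.ge]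
  -- bound the partial sums of xi
  have hsumbdd : ∀ n, ∑ k ∈ Finset.range n, xiSeq α δ k ≤ (m':ℝ) * (1/2) + 8 := by
    intro n
    have hterm : ∀ k, xiSeq α δ k ≤ (if k < m' then (1/2:ℝ) else 0) + 4 * (1/2:ℝ)^k := by
      intro k
      by_cases hk : k < m'
      · simp only [if_pos hk]
        have h1 := xi_le_half hα hδpos k
        have h2 : (0:ℝ) ≤ 4*(1/2:ℝ)^k := by positivity
        linarith
      · simp only [if_neg hk]
        have := hξsmall k (by omega)
        linarith
    have h1 : ∑ k ∈ Finset.range n, xiSeq α δ k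
        ≤ ∑ k ∈ Finset.range n, ((if k < m' then (1/2:ℝ) else 0) + 4 * (1/2:ℝ)^k) :=
      Finset.sum_le_sum (fun k _ => hterm k)
    have h2 : ∑ k ∈ Finset.range n, (if k < m' then (1/2:ℝ) else 0) ≤ (m':ℝ) * (1/2) := by
      have heq : ∑ k ∈ Finset.range n, (if k < m' then (1/2:ℝ) else 0)
          = ∑ k ∈ (Finset.range n).filter (fun k => k < m'), (1/2:ℝ) :=
        (Finset.sum_filter _ _).symm
      rw [heq, Finset.sum_const, nsmul_eq_mul]
      have hsub : (Finset.range n).filter (fun k => k < m') ⊆ Finset.range m' := by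
        intro k hk
        simp only [Finset.mem_filter, Finset.mem_range] at hk ⊢
        exact hk.2
      have hcard : (((Finset.range n).filter (fun k => k < m')).card : ℝ) ≤ (m' : ℝ) := by
        have h := Finset.card_le_card hsub
        rw [Finset.card_range] at h
        exact_mod_cast h
      exact mul_le_mul_of_nonneg_right hcard (by norm_num)
    have h3 : ∑ k ∈ Finset.range n, 4 * (1/2:ℝ)^k ≤ 8 := by
      rw [← Finset.mul_sum]
      have := sum_halfpow_le (Finset.range n)
      linarith
    rw [Finset.sum_add_distrib] at h1
    linarith
  exact piprod_pos_of_bdd hα hδpos _ hsumbdd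

/-- There exists `δ₀ > 0` with `Π(δ) > 0` for all `0 < δ ≤ δ₀` if and only if there is
an `m ≥ 1` such that `α_k > 0` for all `k ≥ m` and the partial sums of
`∑_{k=m}^∞ 2^{−k} log α_k` are bounded from below. -/
theorem stmt14 (α : ℕ → ℝ) (hα : ∀ k, 1 ≤ k → 0 ≤ α k)
    (hbdd : ∃ B : ℝ, ∀ k, 1 ≤ k → α k ≤ B) :
    (∃ δ₀ > (0:ℝ), ∀ δ : ℝ, 0 < δ → δ ≤ δ₀ → 0 < PiProd α δ)
      ↔ (∃ m : ℕ, 1 ≤ m ∧ (∀ k, m ≤ k → 0 < α k) ∧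
          ∃ L : ℝ, ∀ n, L ≤ ∑ k ∈ Finset.Icc m n, (1/2:ℝ)^k * Real.log (α k)) := by
  constructor
  · rintro ⟨δ₀, hδ₀, hall⟩
    have hδ : 0 < min δ₀ 1 := lt_min hδ₀ one_pos
    exact forward α hα (min δ₀ 1) hδ (min_le_right _ _) (hall _ hδ (min_le_left _ _))
  · rintro ⟨m, hm, hpos, L, hL⟩
    obtain ⟨B, hB⟩ := hbdd
    exact backward α hα B hB m hm hpos L hL
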